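/- Let I be a finite index set, and for each i ∈ I let c_i ∈ {0,1} and let H_i : ℝ → ℝ be twice differentiable with 0 < H_i(β) < 1, (H_i'(β))² ≥ H_i''(β)·H_i(β), and (H_i'(β))² ≥ -H_i''(β)·(1 - H_i(β)) for all β ∈ ℝ. Then the negative log-likelihood β ↦ -∑_{i ∈ I} [ c_i · log(H_i(β)) + (1 - c_i) · log(1 - H_i(β)) ] is convex on ℝ. -/

import Mathlib

/-!
Each summand is `-log H i` (if `c i = 1`) or `-log (1 - H i)` (if `c i = 0`). For nonvanishing
`h`, `(-log h)'' = (h' ^ 2 - h'' h) / h ^ 2`, so the two conditions of Eq. 2 say exactly that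
these second derivatives are nonnegative; a finite sum of convex functions is convex.
-/

open Real Set

theorem ConvexOn.finset_sum {𝕜 E β ι : Type*} [Semiring 𝕜] [PartialOrder 𝕜] [AddCommMonoid E]
    [AddCommMonoid β] [PartialOrder β] [IsOrderedAddMonoid β] [SMul 𝕜 E] [Module 𝕜 β]
    {s : Set E} (hs : Convex 𝕜 s) (t : Finset ι) {f : ι → E → β}
    (hf : ∀ i ∈ t, ConvexOn 𝕜 s (f i)) : ConvexOn 𝕜 s (fun x => ∑ i ∈ t, f i x) := by
  classical
  induction t using Finset.induction_on with
  | empty => simpa using convexOn_const 0 hs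
  | insert a t ha ih =>
    simp only [Finset.sum_insert ha]
    exact (hf a (t.mem_insert_self a)).add (ih fun i hi => hf i (Finset.mem_insert_of_mem hi))

theorem convexOn_neg_log_of_deriv2_mul_le_sq {h : ℝ → ℝ} (hd : Differentiable ℝ h)
    (hd' : Differentiable ℝ (deriv h)) (hne : ∀ x, h x ≠ 0)
    (hineq : ∀ x, deriv (deriv h) x * h x ≤ deriv h x ^ 2) :
    ConvexOn ℝ univ (fun x => -log (h x)) := by
  have hderiv : deriv (fun x => -log (h x)) = fun x => -(deriv h x / h x) :=
    funext fun x => ((hd x).hasDerivAt.log (hne x)).neg.deriv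
  have hderiv2 : ∀ x, HasDerivAt (fun x => -(deriv h x / h x))
      (-((deriv (deriv h) x * h x - deriv h x * deriv h x) / h x ^ 2)) x := fun x =>
    ((hd' x).hasDerivAt.div (hd x).hasDerivAt (hne x)).neg
  refine convexOn_univ_of_deriv2_nonneg (fun x => ((hd x).log (hne x)).neg)
    (hderiv ▸ fun x => (hderiv2 x).differentiableAt) fun x => ?_
  rw [Function.iterate_succ_apply', Function.iterate_one, hderiv, (hderiv2 x).deriv,
    neg_nonneg]
  exact div_nonpos_of_nonpos_of_nonneg (by nlinarith [hineq x]) (sq_nonneg _)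

theorem convexOn_neg_log_one_sub_of_neg_deriv2_mul_le_sq {h : ℝ → ℝ} (hd : Differentiable ℝ h)
    (hd' : Differentiable ℝ (deriv h)) (hne : ∀ x, h x ≠ 1)
    (hineq : ∀ x, -deriv (deriv h) x * (1 - h x) ≤ deriv h x ^ 2) :
    ConvexOn ℝ univ (fun x => -log (1 - h x)) := by
  have hderiv : deriv (fun x => 1 - h x) = fun x => -deriv h x := deriv_const_sub' 1
  refine convexOn_neg_log_of_deriv2_mul_le_sq (hd.const_sub 1) (hderiv ▸ hd'.neg)
    (fun x => sub_ne_zero.2 (hne x).symm) fun x => ?_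
  rw [hderiv, deriv.fun_neg, neg_sq]
  exact hineq x

/-- Convexity of the negative log-likelihood (Proposition 1 of the paper, scalar
parameter): for a finite family of hazard functions `H i` satisfying the conditions
of Eq. 2 and binary contagion indicators `c i ∈ {0, 1}`, the map
`β ↦ -∑ i, (c i * log (H i β) + (1 - c i) * log (1 - H i β))` is convex on `ℝ`. -/
theorem neg_log_likelihood_convex {ι : Type*} (I : Finset ι)
    (c : ι → ℝ) (hc : ∀ i ∈ I, c i = 0 ∨ c i = 1)
    (H : ι → ℝ → ℝ)
    (hH : ∀ i ∈ I, ∀ β : ℝ, DifferentiableAt ℝ (H i) β)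
    (hH' : ∀ i ∈ I, ∀ β : ℝ, DifferentiableAt ℝ (deriv (H i)) β)
    (hpos : ∀ i ∈ I, ∀ β : ℝ, 0 < H i β) (hlt : ∀ i ∈ I, ∀ β : ℝ, H i β < 1)
    (hineq1 : ∀ i ∈ I, ∀ β : ℝ, (deriv (H i) β) ^ 2 ≥ deriv (deriv (H i)) β * H i β)
    (hineq2 : ∀ i ∈ I, ∀ β : ℝ,
      (deriv (H i) β) ^ 2 ≥ -(deriv (deriv (H i)) β) * (1 - H i β)) :
    ConvexOn ℝ Set.univ
      (fun β : ℝ =>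
        -∑ i ∈ I, (c i * Real.log (H i β) + (1 - c i) * Real.log (1 - H i β))) := by
  have hterm : ∀ i ∈ I, ConvexOn ℝ univ
      (fun β => -(c i * log (H i β) + (1 - c i) * log (1 - H i β))) := by
    intro i hi
    rcases hc i hi with hc0 | hc1
    · simpa [hc0] using convexOn_neg_log_one_sub_of_neg_deriv2_mul_le_sq (hH i hi) (hH' i hi)
        (fun β => (hlt i hi β).ne) (hineq2 i hi)
    · simpa [hc1] using convexOn_neg_log_of_deriv2_mul_le_sq (hH i hi) (hH' i hi)
        (fun β => (hpos i hi β).ne') (hineq1 i hi)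
  simpa only [Finset.sum_neg_distrib] using ConvexOn.finset_sum convex_univ I hterm
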